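/- Let r and s be integers and define the sequence f(n) = C_n · ((r - s) · n + s) for n ≥ 0, where C_n is the n-th Catalan number. Then for every integer n ≥ 2, f(n) = Σ_{k=1}^{n} (-1)^{k+1} [ binom(2n-k, k) + binom(2n-k-1, k-1) ] · f(n-k). -/

import Mathlib

/-!
The polynomials `P m = ∑ₖ (-1)ᵏ C(m-k,k) Xᵏ (X+1)^(m-2k)` satisfy
`P (m+2) = (X+1) P (m+1) - X P m`, hence `P m = 1 + X + ⋯ + Xᵐ`. Reading off the coefficients
of `Xⁿ` and `Xⁿ⁻¹` in `P (2n)` gives `∑ₖ (-1)ᵏ C(2n-k,k) g(n-k) = 1` both for `g m = C(2m,m)` and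
for `g m = C(2m,m-1) = m Cₘ`. As `f m = (r-2s) m Cₘ + s C(2m,m)`, the alternating sum
`∑ₖ (-1)ᵏ C(2n-k,k) f(n-k)` equals `r - s` for every `n ≥ 1`. Since
`C(2n-k-1,k-1) = C(2(n-1)-(k-1),k-1)`, the right-hand side of the recurrence is `f n` minus this
sum at `n` plus this sum at `n - 1`.
-/

open Finset Polynomial

noncomputable def kaplanskyTerm (m k : ℕ) : ℤ[X] :=
  (((-1) ^ k * (m - k).choose k : ℤ) : ℤ[X]) * (X ^ k * (X + 1) ^ (m - 2 * k))

noncomputable def kaplanskyPoly (m : ℕ) : ℤ[X] :=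
  ∑ k ∈ range (m + 1), kaplanskyTerm m k

lemma kaplanskyTerm_eq_zero_of_lt {m k : ℕ} (h : m < 2 * k) : kaplanskyTerm m k = 0 := by
  simp [kaplanskyTerm, Nat.choose_eq_zero_of_lt (by omega : m - k < k)]

lemma kaplanskyTerm_zero (m : ℕ) : kaplanskyTerm m 0 = (X + 1) ^ m := by
  simp [kaplanskyTerm]

lemma kaplanskyTerm_add_two_succ (m k : ℕ) :
    kaplanskyTerm (m + 2) (k + 1) =
      (X + 1) * kaplanskyTerm (m + 1) (k + 1) - X * kaplanskyTerm m k := by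
  rcases le_or_gt k m with hkm | hmk
  · have pascal : (m + 2 - (k + 1)).choose (k + 1) =
        (m - k).choose k + (m + 1 - (k + 1)).choose (k + 1) := by
      rw [show m + 2 - (k + 1) = m - k + 1 by omega, show m + 1 - (k + 1) = m - k by omega,
        Nat.choose_succ_succ]
    rcases le_or_gt (2 * k + 1) m with h | h
    · have hexp : m + 2 - 2 * (k + 1) = m + 1 - 2 * (k + 1) + 1 := by omega
      simp only [kaplanskyTerm, pascal, hexp, show m - 2 * k = m + 1 - 2 * (k + 1) + 1 by omega]
      push_cast
      ring
    · have hzero : (m + 1 - (k + 1)).choose (k + 1) = 0 := Nat.choose_eq_zero_of_lt (by omega)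
      simp only [kaplanskyTerm, pascal, hzero, show m + 2 - 2 * (k + 1) = m - 2 * k by omega]
      push_cast
      ring
  · rw [kaplanskyTerm_eq_zero_of_lt (show m + 2 < 2 * (k + 1) by omega),
      kaplanskyTerm_eq_zero_of_lt (show m + 1 < 2 * (k + 1) by omega),
      kaplanskyTerm_eq_zero_of_lt (show m < 2 * k by omega)]
    ring

lemma kaplanskyPoly_add_two (m : ℕ) :
    kaplanskyPoly (m + 2) = (X + 1) * kaplanskyPoly (m + 1) - X * kaplanskyPoly m := by
  have h1 : kaplanskyPoly (m + 1) = ∑ k ∈ range (m + 3), kaplanskyTerm (m + 1) k := by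
    rw [sum_range_succ _ (m + 2), kaplanskyTerm_eq_zero_of_lt (by omega), add_zero]; rfl
  have h0 : kaplanskyPoly m = ∑ k ∈ range (m + 2), kaplanskyTerm m k := by
    rw [sum_range_succ _ (m + 1), kaplanskyTerm_eq_zero_of_lt (by omega), add_zero]; rfl
  rw [h1, h0, kaplanskyPoly, sum_range_succ', sum_range_succ' _ (m + 2), mul_add, mul_sum, mul_sum]
  simp only [kaplanskyTerm_add_two_succ, sum_sub_distrib, kaplanskyTerm_zero]
  ring

lemma kaplanskyPoly_eq_sum_X_pow (m : ℕ) : kaplanskyPoly m = ∑ i ∈ range (m + 1), X ^ i := by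
  induction m using Nat.twoStepInduction with
  | zero => simp [kaplanskyPoly, kaplanskyTerm]
  | one => simp [kaplanskyPoly, kaplanskyTerm, sum_range_succ]; ring
  | more m ih0 ih1 =>
    rw [kaplanskyPoly_add_two, ih0, ih1, sum_range_succ _ (m + 2), sum_range_succ _ (m + 1)]
    ring

lemma coeff_kaplanskyTerm (m k j : ℕ) :
    (kaplanskyTerm m k).coeff j =
      if k ≤ j then (-1 : ℤ) ^ k * (m - k).choose k * (m - 2 * k).choose (j - k) else 0 := by
  rw [kaplanskyTerm, coeff_intCast_mul, coeff_X_pow_mul', coeff_X_add_one_pow]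
  split_ifs <;> simp

theorem sum_neg_one_pow_mul_choose_mul_choose {m j : ℕ} (h : j ≤ m) :
    ∑ k ∈ range (j + 1), (-1 : ℤ) ^ k * (m - k).choose k * (m - 2 * k).choose (j - k) = 1 := by
  have hcoeff := congrArg (coeff · j) (kaplanskyPoly_eq_sum_X_pow m)
  simp only [kaplanskyPoly, finsetSum_coeff, coeff_kaplanskyTerm, coeff_X_pow, sum_ite_eq,
    mem_range, ← sum_filter] at hcoeff
  rwa [if_pos (by omega), show (range (m + 1)).filter (· ≤ j) = range (j + 1) by
    ext; simp; omega] at hcoeff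

theorem choose_two_mul_add_two (m : ℕ) : (2 * (m + 1)).choose m = (m + 1) * catalan (m + 1) := by
  have h := Nat.choose_succ_right_eq (2 * (m + 1)) m
  rw [← Nat.centralBinom_eq_two_mul_choose, ← succ_mul_catalan_eq_centralBinom,
    show 2 * (m + 1) - m = m + 2 by omega] at h
  exact Nat.eq_of_mul_eq_mul_right (show 0 < m + 2 by omega) (by rw [← h]; ring)

section kaplanskySum

variable {R : Type*} [CommRing R]

def kaplanskySum (f : ℕ → R) (n : ℕ) : R :=
  ∑ k ∈ range (n + 1), (-1) ^ k * ((2 * n - k).choose k : R) * f (n - k)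

lemma kaplanskySum_linear_combination (a b : R) (f g : ℕ → R) (n : ℕ) :
    kaplanskySum (fun m => a * f m + b * g m) n = a * kaplanskySum f n + b * kaplanskySum g n := by
  simp only [kaplanskySum, mul_sum, ← sum_add_distrib]
  exact sum_congr rfl fun k _ => by ring

theorem sum_Icc_eq_sub_kaplanskySum_add_kaplanskySum (f : ℕ → R) (n : ℕ) :
    ∑ k ∈ Icc 1 (n + 1), (-1 : R) ^ (k + 1) *
        ((Nat.choose (2 * (n + 1) - k) k + Nat.choose (2 * (n + 1) - k - 1) (k - 1) : ℕ) : R) *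
        f (n + 1 - k) =
      f (n + 1) - kaplanskySum f (n + 1) + kaplanskySum f n := by
  rw [← Ico_add_one_right_eq_Icc, sum_Ico_eq_sum_range, kaplanskySum, kaplanskySum,
    sum_range_succ', add_tsub_cancel_right]
  simp only [pow_zero, Nat.sub_zero, Nat.choose_zero_right, Nat.cast_one, one_mul]
  rw [add_comm _ (f (n + 1)), sub_add_cancel_left, neg_add_eq_sub, ← sum_sub_distrib]
  refine sum_congr rfl fun k _ => ?_
  rw [add_comm 1 k, show 2 * (n + 1) - (k + 1) - 1 = 2 * n - k by omega, Nat.add_sub_cancel,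
    Nat.add_sub_add_right]
  push_cast
  ring

end kaplanskySum

lemma kaplanskySum_centralBinom (n : ℕ) : kaplanskySum (fun m => (m.centralBinom : ℤ)) n = 1 := by
  refine (sum_congr rfl fun k _ => ?_).trans
    (sum_neg_one_pow_mul_choose_mul_choose (show n ≤ 2 * n by omega))
  dsimp only
  rw [Nat.centralBinom_eq_two_mul_choose, show 2 * (n - k) = 2 * n - 2 * k by omega]

lemma kaplanskySum_mul_catalan (n : ℕ) :
    kaplanskySum (fun m => ((m * catalan m : ℕ) : ℤ)) (n + 1) = 1 := by
  rw [kaplanskySum, sum_range_succ, Nat.sub_self, zero_mul, Nat.cast_zero, mul_zero, add_zero]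
  refine (sum_congr rfl fun k hk => ?_).trans
    (sum_neg_one_pow_mul_choose_mul_choose (show n ≤ 2 * (n + 1) by omega))
  rw [mem_range] at hk
  rw [show n + 1 - k = n - k + 1 by omega, ← choose_two_mul_add_two,
    show 2 * (n - k + 1) = 2 * (n + 1) - 2 * k by omega]

theorem kaplanskySum_catalan_linear (r s : ℤ) {n : ℕ} (hn : 1 ≤ n) :
    kaplanskySum (fun m => (catalan m : ℤ) * ((r - s) * m + s)) n = r - s := by
  obtain ⟨n, rfl⟩ : ∃ n', n = n' + 1 := ⟨n - 1, by omega⟩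
  have hf : (fun m => (catalan m : ℤ) * ((r - s) * m + s)) =
      fun m => (r - 2 * s) * ((m * catalan m : ℕ) : ℤ) + s * (m.centralBinom : ℤ) := by
    funext m
    rw [← succ_mul_catalan_eq_centralBinom]
    push_cast
    ring
  rw [hf, kaplanskySum_linear_combination, kaplanskySum_mul_catalan, kaplanskySum_centralBinom]
  ring

/-- The closed-form sequence `f(n) = C_n ((r-s) n + s)` satisfies the
Kaplansky-coefficient recurrence for all `n ≥ 2`. -/
theorem catalan_closed_form_recurrence (r s : ℤ) (n : ℕ) (hn : 2 ≤ n) :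
    (catalan n : ℤ) * ((r - s) * (n : ℤ) + s) =
      ∑ k ∈ Finset.Icc 1 n, (-1 : ℤ) ^ (k + 1) *
        ((Nat.choose (2 * n - k) k + Nat.choose (2 * n - k - 1) (k - 1) : ℕ) : ℤ) *
        ((catalan (n - k) : ℤ) * ((r - s) * ((n - k : ℕ) : ℤ) + s)) := by
  obtain ⟨m, rfl⟩ : ∃ m, n = m + 1 := ⟨n - 1, by omega⟩
  have key := sum_Icc_eq_sub_kaplanskySum_add_kaplanskySum
    (fun j => (catalan j : ℤ) * ((r - s) * j + s)) m
  rw [kaplanskySum_catalan_linear r s (by omega), kaplanskySum_catalan_linear r s (by omega)] at key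
  rw [key]
  ring
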